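/- arXiv:1804.00285 — 3 statements merged into one kernel-verified Lean document; each statement's English description precedes it below -/
import Mathlib

section
/- (Time-reversibility of the WOU approximation, one-dimensional case of Corollary, part iii.) For all θ, θ_s ∈ ℝ and all t > 0, the WOU conditional density satisfies the detailed-balance identity f_WN(θ_s; μ, v∞)·p_t(θ | θ_s) = f_WN(θ; μ, v∞)·p_t(θ_s | θ). -/
open MeasureTheory Real

/-- Centered Gaussian density with variance `v` on `ℝ`. -/
noncomputable def gaussDens (v x : ℝ) : ℝ :=
  (Real.sqrt (2 * Real.pi * v))⁻¹ * Real.exp (-(x ^ 2) / (2 * v))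

/-- Wrapped normal density `f_WN(θ; μ, v)`. -/
noncomputable def fWN (μ v θ : ℝ) : ℝ :=
  ∑' k : ℤ, gaussDens v (θ - μ + 2 * (k : ℝ) * Real.pi)

/-- Winding-number weights `w_k(θ)` with stationary variance `v∞ = σ²/(2α)`. -/
noncomputable def wnWeight (α μ σ : ℝ) (k : ℤ) (θ : ℝ) : ℝ :=
  gaussDens (σ ^ 2 / (2 * α)) (θ - μ + 2 * (k : ℝ) * Real.pi) / fWN μ (σ ^ 2 / (2 * α)) θ

/-- Conditional mean `μ_t^m(θ_s) = μ + e^{−αt}(θ_s − μ + 2mπ)`. -/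
noncomputable def wouMean (α μ : ℝ) (t : ℝ) (m : ℤ) (θs : ℝ) : ℝ :=
  μ + Real.exp (-(α * t)) * (θs - μ + 2 * (m : ℝ) * Real.pi)

/-- Conditional variance `γ_t = σ²(1 − e^{−2αt})/(2α)`. -/
noncomputable def wouVar (α σ t : ℝ) : ℝ :=
  σ ^ 2 * (1 - Real.exp (-(2 * α * t))) / (2 * α)

/-- The WOU conditional density `p_t(θ | θ_s)`. -/
noncomputable def pWOU (α μ σ t θ θs : ℝ) : ℝ :=
  ∑' m : ℤ, wnWeight α μ σ m θs * fWN (wouMean α μ t m θs) (wouVar α σ t) θ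

/- ### Auxiliary lemmas -/

lemma gaussDens_pos {v : ℝ} (hv : 0 < v) (x : ℝ) : 0 < gaussDens v x := by
  rw [gaussDens]
  have h : 0 < Real.sqrt (2 * Real.pi * v) :=
    Real.sqrt_pos.mpr (by positivity)
  positivity

lemma gaussDens_nonneg (v x : ℝ) : 0 ≤ gaussDens v x := by
  rw [gaussDens]
  positivity

lemma summable_exp_neg_abs_int {d : ℝ} (hd : 0 < d) :
    Summable fun k : ℤ => Real.exp (-(d * |(k : ℝ)|)) := by
  have hlt : Real.exp (-d) < 1 := Real.exp_lt_one_iff.mpr (by linarith)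
  have hs : Summable fun n : ℕ => Real.exp (-d) ^ n :=
    summable_geometric_of_lt_one (Real.exp_pos _).le hlt
  have key : ∀ n : ℕ, Real.exp (-(d * (n : ℝ))) = Real.exp (-d) ^ n := by
    intro n
    rw [← Real.exp_nat_mul]
    ring_nf
  apply Summable.of_nat_of_neg
  · exact hs.congr fun n => by simp [key n]
  · exact hs.congr fun n => by simp [key n]

lemma summable_exp_neg_mul_sq_int {c : ℝ} (hc : 0 < c) (x : ℝ) :
    Summable fun k : ℤ => Real.exp (-(c * (x + 2 * (k : ℝ) * Real.pi) ^ 2)) := by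
  have hmaj : Summable fun k : ℤ =>
      Real.exp (c * x ^ 2) * Real.exp (-(2 * c * Real.pi ^ 2 * |(k : ℝ)|)) :=
    (summable_exp_neg_abs_int (by positivity)).mul_left _
  refine Summable.of_nonneg_of_le (fun k => (Real.exp_pos _).le) (fun k => ?_) hmaj
  rw [← Real.exp_add]
  apply Real.exp_le_exp.mpr
  have h1 : |((k : ℝ))| ≤ (k : ℝ) ^ 2 := by
    rcases eq_or_ne k 0 with h | h
    · simp [h]
    · have h1 : (1 : ℝ) ≤ |(k : ℝ)| := by
        have := Int.one_le_abs (by simpa using h)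
        calc (1 : ℝ) ≤ |(k : ℤ)| := by exact_mod_cast this
          _ = |(k : ℝ)| := by push_cast [Int.cast_abs]; rfl
      calc |(k : ℝ)| = 1 * |(k : ℝ)| := (one_mul _).symm
        _ ≤ |(k : ℝ)| * |(k : ℝ)| := by
            exact mul_le_mul_of_nonneg_right h1 (abs_nonneg _)
        _ = (k : ℝ) ^ 2 := by rw [← abs_mul, ← sq, abs_sq]
  have h2 : 2 * c * Real.pi ^ 2 * |(k : ℝ)| ≤ 2 * c * Real.pi ^ 2 * (k : ℝ) ^ 2 :=
    mul_le_mul_of_nonneg_left h1 (by positivity)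
  have h3 : 0 ≤ c * (2 * (k : ℝ) * Real.pi + 2 * x) ^ 2 :=
    mul_nonneg hc.le (sq_nonneg _)
  nlinarith [h2, h3]

lemma summable_gauss {v : ℝ} (hv : 0 < v) (x : ℝ) :
    Summable fun k : ℤ => gaussDens v (x + 2 * (k : ℝ) * Real.pi) := by
  have h := (summable_exp_neg_mul_sq_int (c := (2 * v)⁻¹) (by positivity) x).mul_left
    (Real.sqrt (2 * Real.pi * v))⁻¹
  refine h.congr fun k => ?_
  rw [gaussDens]
  congr 1
  field_simp

lemma fWN_pos {v : ℝ} (hv : 0 < v) (μ θ : ℝ) : 0 < fWN μ v θ := by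
  rw [fWN]
  exact Summable.tsum_pos (summable_gauss hv _) (fun k => gaussDens_nonneg _ _) 0
    (gaussDens_pos hv _)

lemma gauss_detailed_balance {v q : ℝ} (hv : 0 < v) (hq0 : 0 < q) (hq1 : q < 1)
    (X Y : ℝ) :
    gaussDens v X * gaussDens (v * (1 - q ^ 2)) (Y - q * X) =
      gaussDens v Y * gaussDens (v * (1 - q ^ 2)) (X - q * Y) := by
  have h1q : (0 : ℝ) < 1 - q ^ 2 := by nlinarith
  have hγ : (0 : ℝ) < v * (1 - q ^ 2) := mul_pos hv h1q
  simp only [gaussDens]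
  rw [mul_mul_mul_comm, ← Real.exp_add]
  conv_rhs => rw [mul_mul_mul_comm, ← Real.exp_add]
  congr 1
  field_simp
  ring

lemma gauss_prod_le {v q : ℝ} (hv : 0 < v) (hq0 : 0 < q) (hq1 : q < 1) (X Y : ℝ) :
    gaussDens v X * gaussDens (v * (1 - q ^ 2)) (Y - q * X) ≤
      (Real.sqrt (2 * Real.pi * v))⁻¹ *
        (Real.sqrt (2 * Real.pi * (v * (1 - q ^ 2))))⁻¹ *
        (Real.exp (-((1 - q) / (2 * (v * (1 - q ^ 2))) * X ^ 2)) *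
          Real.exp (-((1 - q) / (2 * (v * (1 - q ^ 2))) * Y ^ 2))) := by
  have h1q : (0 : ℝ) < 1 - q ^ 2 := by nlinarith
  have hγ : (0 : ℝ) < v * (1 - q ^ 2) := mul_pos hv h1q
  simp only [gaussDens]
  rw [mul_mul_mul_comm, ← Real.exp_add, ← Real.exp_add]
  refine mul_le_mul_of_nonneg_left (Real.exp_le_exp.mpr ?_) (by positivity)
  rw [← sub_nonneg]
  have heq : -((1 - q) / (2 * (v * (1 - q ^ 2))) * X ^ 2) +
        -((1 - q) / (2 * (v * (1 - q ^ 2))) * Y ^ 2) -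
        (-(X ^ 2) / (2 * v) + -((Y - q * X) ^ 2) / (2 * (v * (1 - q ^ 2)))) =
      q * (X - Y) ^ 2 / (2 * (v * (1 - q ^ 2))) := by
    field_simp
    ring
  rw [heq]
  positivity

lemma pWOU_expand (α μ σ : ℝ) (hα : 0 < α) (hσ : 0 < σ) (t a b : ℝ) :
    fWN μ (σ ^ 2 / (2 * α)) b * pWOU α μ σ t a b =
      ∑' m : ℤ, ∑' k : ℤ,
        gaussDens (σ ^ 2 / (2 * α)) (b - μ + 2 * (m : ℝ) * Real.pi) *
          gaussDens (wouVar α σ t)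
            ((a - μ + 2 * (k : ℝ) * Real.pi) -
              Real.exp (-(α * t)) * (b - μ + 2 * (m : ℝ) * Real.pi)) := by
  have hv : (0 : ℝ) < σ ^ 2 / (2 * α) := by positivity
  have hne : fWN μ (σ ^ 2 / (2 * α)) b ≠ 0 := (fWN_pos hv μ b).ne'
  rw [pWOU, ← tsum_mul_left]
  refine tsum_congr fun m => ?_
  rw [wnWeight]
  rw [show fWN μ (σ ^ 2 / (2 * α)) b *
        (gaussDens (σ ^ 2 / (2 * α)) (b - μ + 2 * (m : ℝ) * Real.pi) /
            fWN μ (σ ^ 2 / (2 * α)) b *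
          fWN (wouMean α μ t m b) (wouVar α σ t) a) =
      gaussDens (σ ^ 2 / (2 * α)) (b - μ + 2 * (m : ℝ) * Real.pi) *
        fWN (wouMean α μ t m b) (wouVar α σ t) a by
      field_simp]
  rw [fWN, ← tsum_mul_left]
  refine tsum_congr fun k => ?_
  have harg : a - wouMean α μ t m b + 2 * (k : ℝ) * Real.pi =
      (a - μ + 2 * (k : ℝ) * Real.pi) -
        Real.exp (-(α * t)) * (b - μ + 2 * (m : ℝ) * Real.pi) := by
    rw [wouMean]; ring
  rw [harg]

/-- Time-reversibility (detailed balance) of the WOU conditional density with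
respect to the stationary wrapped normal density `f_WN(·; μ, σ²/(2α))`. -/
theorem pWOU_time_reversible (α μ σ : ℝ) (hα : 0 < α) (hσ : 0 < σ)
    (θ θs : ℝ) (t : ℝ) (ht : 0 < t) :
    fWN μ (σ ^ 2 / (2 * α)) θs * pWOU α μ σ t θ θs =
      fWN μ (σ ^ 2 / (2 * α)) θ * pWOU α μ σ t θs θ := by
  have hv : (0 : ℝ) < σ ^ 2 / (2 * α) := by positivity
  set v : ℝ := σ ^ 2 / (2 * α) with hv_def
  set q : ℝ := Real.exp (-(α * t)) with hq_def
  have hq0 : 0 < q := Real.exp_pos _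
  have hq1 : q < 1 := Real.exp_lt_one_iff.mpr (by nlinarith)
  have hγeq : wouVar α σ t = v * (1 - q ^ 2) := by
    have hqq : q ^ 2 = Real.exp (-(2 * α * t)) := by
      rw [sq, hq_def, ← Real.exp_add]
      ring_nf
    rw [wouVar, ← hqq, hv_def]
    field_simp
    try ring
  set T : ℤ → ℤ → ℝ := fun m k =>
    gaussDens v (θs - μ + 2 * (m : ℝ) * Real.pi) *
      gaussDens (wouVar α σ t)
        ((θ - μ + 2 * (k : ℝ) * Real.pi) - q * (θs - μ + 2 * (m : ℝ) * Real.pi))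
    with hT_def
  have hL : fWN μ v θs * pWOU α μ σ t θ θs = ∑' m : ℤ, ∑' k : ℤ, T m k :=
    pWOU_expand α μ σ hα hσ t θ θs
  have hR : fWN μ v θ * pWOU α μ σ t θs θ = ∑' m : ℤ, ∑' k : ℤ, T k m := by
    rw [pWOU_expand α μ σ hα hσ t θs θ]
    refine tsum_congr fun m => tsum_congr fun k => ?_
    rw [hT_def]
    simp only
    rw [hγeq]
    exact gauss_detailed_balance hv hq0 hq1 _ _
  rw [hL, hR]
  -- Fubini: need summability of the uncurried double sum
  have h1q : (0 : ℝ) < 1 - q ^ 2 := by nlinarith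
  have hγpos : (0 : ℝ) < v * (1 - q ^ 2) := mul_pos hv h1q
  set c : ℝ := (1 - q) / (2 * (v * (1 - q ^ 2))) with hc_def
  have hcpos : 0 < c := by
    rw [hc_def]
    exact div_pos (by linarith) (by linarith)
  have hf : Summable fun m : ℤ =>
      Real.exp (-(c * (θs - μ + 2 * (m : ℝ) * Real.pi) ^ 2)) :=
    summable_exp_neg_mul_sq_int hcpos _
  have hg : Summable fun k : ℤ =>
      Real.exp (-(c * (θ - μ + 2 * (k : ℝ) * Real.pi) ^ 2)) :=
    summable_exp_neg_mul_sq_int hcpos _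
  have hmaj : Summable fun p : ℤ × ℤ =>
      ((Real.sqrt (2 * Real.pi * v))⁻¹ *
          (Real.sqrt (2 * Real.pi * (v * (1 - q ^ 2))))⁻¹) *
        (Real.exp (-(c * (θs - μ + 2 * (p.1 : ℝ) * Real.pi) ^ 2)) *
          Real.exp (-(c * (θ - μ + 2 * (p.2 : ℝ) * Real.pi) ^ 2))) :=
    (hf.mul_of_nonneg hg (fun m => (Real.exp_pos _).le)
      (fun k => (Real.exp_pos _).le)).mul_left _
  have hsum : Summable (Function.uncurry T) := by
    refine Summable.of_nonneg_of_le (fun p => ?_) (fun p => ?_) hmaj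
    · exact mul_nonneg (gaussDens_nonneg _ _) (gaussDens_nonneg _ _)
    · have := gauss_prod_le hv hq0 hq1 (θs - μ + 2 * (p.1 : ℝ) * Real.pi)
        (θ - μ + 2 * (p.2 : ℝ) * Real.pi)
      simp only [Function.uncurry, hT_def]
      rw [hγeq]
      calc gaussDens v (θs - μ + 2 * (p.1 : ℝ) * Real.pi) *
            gaussDens (v * (1 - q ^ 2))
              ((θ - μ + 2 * (p.2 : ℝ) * Real.pi) -
                q * (θs - μ + 2 * (p.1 : ℝ) * Real.pi)) ≤ _ := this
        _ = _ := by rw [hc_def]; try ring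
  exact (Summable.tsum_comm hsum).symm
end

section
/- (Closed form for the exponential of a 2×2 real matrix; Corollary 2.4 of Bernstein and So, real-eigenvalue case.) Let A be a real 2×2 matrix, let s := tr(A)/2, and suppose det(A − s·I) < 0; set q := √(−det(A − s·I)) > 0. Then for every t ∈ ℝ, exp(tA) = a(t)·I + b(t)·A, where a(t) := e^{st}·(cosh(qt) − s·sinh(qt)/q) and b(t) := e^{st}·sinh(qt)/q. -/
/-!
With `s = tr A / 2`, the matrix `N = A - s • 1` is trace-free, so Cayley–Hamilton gives
`N * N = q ^ 2 • 1`. Then `t ↦ cosh (q t) • 1 + (sinh (q t) / q) • N` solves `f' = f N`, `f 0 = 1`,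
hence equals `exp (t • N)` (uniqueness: `f t * exp (-t • N)` has zero derivative), and
`exp (t • A) = e^{s t} • exp (t • N)` because `s • 1` commutes with `N`.
-/

open NormedSpace

section ExpODE

variable {𝔸 : Type*} [NormedRing 𝔸] [NormedAlgebra ℝ 𝔸] [CompleteSpace 𝔸]

theorem eq_mul_exp_smul_of_hasDerivAt {A : 𝔸} {f : ℝ → 𝔸}
    (hf : ∀ t, HasDerivAt f (f t * A) t) (t : ℝ) : f t = f 0 * exp (t • A) := by
  let +nondep : NormedAlgebra ℚ 𝔸 := .restrictScalars ℚ ℝ 𝔸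
  have hderiv : ∀ u, HasDerivAt (fun u => f u * exp (u • -A)) 0 u := fun u =>
    ((hf u).mul (hasDerivAt_exp_smul_const' (-A) u)).congr_deriv <| by
      rw [neg_mul, mul_neg, mul_assoc, add_neg_cancel]
  have hconst := is_const_of_deriv_eq_zero (fun u => (hderiv u).differentiableAt)
    (fun u => (hderiv u).deriv) t 0
  have hinv : exp (t • -A) * exp (t • A) = 1 := by
    rw [smul_neg, ← exp_add_of_commute (Commute.refl _).neg_left, neg_add_cancel, exp_zero]
  calc f t = f t * exp (t • -A) * exp (t • A) := by rw [mul_assoc, hinv, mul_one]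
    _ = f 0 * exp (t • A) := by simp only [hconst, zero_smul, exp_zero, mul_one]

theorem exp_smul_eq_cosh_add_sinh_of_mul_self {N : 𝔸} {q : ℝ} (hq : q ≠ 0)
    (hN : N * N = q ^ 2 • (1 : 𝔸)) (t : ℝ) :
    exp (t • N) = Real.cosh (q * t) • (1 : 𝔸) + (Real.sinh (q * t) / q) • N := by
  set f : ℝ → 𝔸 := fun t => Real.cosh (q * t) • (1 : 𝔸) + (Real.sinh (q * t) / q) • N
  have hf : ∀ t, HasDerivAt f (f t * N) t := fun t => by
    have hlin := (hasDerivAt_id t).const_mul q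
    refine ((hlin.cosh.smul_const (1 : 𝔸)).add
      ((hlin.sinh.div_const q).smul_const N)).congr_deriv ?_
    simp only [f, add_mul, smul_mul_assoc, one_mul, hN, smul_smul, id]
    field_simp
    module
  simpa [f] using (eq_mul_exp_smul_of_hasDerivAt hf t).symm

theorem exp_smul_eq_of_sub_smul_one_mul_self {A : 𝔸} {s q : ℝ} (hq : q ≠ 0)
    (hA : (A - s • (1 : 𝔸)) * (A - s • (1 : 𝔸)) = q ^ 2 • (1 : 𝔸)) (t : ℝ) :
    exp (t • A) =
      (Real.exp (s * t) * (Real.cosh (q * t) - s * Real.sinh (q * t) / q)) • (1 : 𝔸) +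
        (Real.exp (s * t) * (Real.sinh (q * t) / q)) • A := by
  let +nondep : NormedAlgebra ℚ 𝔸 := .restrictScalars ℚ ℝ 𝔸
  have hsplit : t • A = algebraMap ℝ 𝔸 (s * t) + t • (A - s • (1 : 𝔸)) := by
    rw [Algebra.algebraMap_eq_smul_one]
    module
  rw [hsplit, exp_add_of_commute (Algebra.commute_algebraMap_left _ _), ← algebraMap_exp_comm,
    ← Real.exp_eq_exp_ℝ, exp_smul_eq_cosh_add_sinh_of_mul_self hq hA,
    Algebra.algebraMap_eq_smul_one]
  simp only [smul_mul_assoc, one_mul, smul_add, smul_sub, smul_smul]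
  module

end ExpODE

theorem Matrix.mul_self_eq_neg_det_smul_one_of_trace_eq_zero {R : Type*} [CommRing R]
    {M : Matrix (Fin 2) (Fin 2) R} (hM : M.trace = 0) :
    M * M = -M.det • (1 : Matrix (Fin 2) (Fin 2) R) := by
  nontriviality R
  have hCH := M.aeval_self_charpoly
  rw [Matrix.charpoly_fin_two, hM] at hCH
  simp only [map_zero, zero_mul, sub_zero, map_add, map_pow, Polynomial.aeval_X,
    Polynomial.aeval_C] at hCH
  rw [neg_smul, eq_neg_iff_add_eq_zero, ← sq, ← hCH, Algebra.algebraMap_eq_smul_one]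

-- Any submultiplicative norm makes the lemmas above applicable; `exp` itself does not depend on it.
attribute [local instance] Matrix.linftyOpNormedRing Matrix.linftyOpNormedAlgebra

/-- Closed form for the exponential of a real 2×2 matrix (real-eigenvalue case,
Corollary 2.4 of Bernstein and So): writing `s = tr(A)/2` and
`q = √(−det(A − s·I)) > 0`, one has `exp(tA) = a(t)·I + b(t)·A` with
`a(t) = e^{st}(cosh(qt) − s·sinh(qt)/q)` and `b(t) = e^{st}·sinh(qt)/q`. -/
theorem exp_two_by_two (A : Matrix (Fin 2) (Fin 2) ℝ)
    (s : ℝ) (hs : s = A.trace / 2)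
    (hdet : (A - s • (1 : Matrix (Fin 2) (Fin 2) ℝ)).det < 0)
    (q : ℝ) (hq : q = Real.sqrt (-(A - s • (1 : Matrix (Fin 2) (Fin 2) ℝ)).det)) :
    ∀ t : ℝ,
      NormedSpace.exp (t • A) =
        (Real.exp (s * t) * (Real.cosh (q * t) - s * Real.sinh (q * t) / q)) •
            (1 : Matrix (Fin 2) (Fin 2) ℝ) +
          (Real.exp (s * t) * (Real.sinh (q * t) / q)) • A := by
  intro t
  set N := A - s • (1 : Matrix (Fin 2) (Fin 2) ℝ)
  have htrace : N.trace = 0 := by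
    simp only [N, Matrix.trace_sub, Matrix.trace_smul, Matrix.trace_one, Fintype.card_fin, hs]
    norm_num
  have hNN : N * N = q ^ 2 • (1 : Matrix (Fin 2) (Fin 2) ℝ) := by
    rw [Matrix.mul_self_eq_neg_det_smul_one_of_trace_eq_zero htrace, hq,
      Real.sq_sqrt (neg_nonneg.2 hdet.le)]
  have hq0 : q ≠ 0 := hq ▸ (Real.sqrt_pos.2 (neg_pos.2 hdet)).ne'
  exact exp_smul_eq_of_sub_smul_one_mul_self hq0 hNN t
end

section
/- (Closed form of the OU covariance integral.) Let A and Σ be real p×p matrices with A invertible, Σ symmetric, and A⁻¹Σ symmetric. Then for every t ≥ 0, Γ_t := ∫₀ᵗ exp(−sA)·Σ·exp(−sAᵀ) ds = (1/2)·A⁻¹·(I − exp(−2tA))·Σ. -/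
/-!
The symmetry of `Σ` and `A⁻¹Σ` says exactly that `AΣ = ΣAᵀ`, so `Σ` intertwines `exp(cAᵀ)` with
`exp(cA)` and the integrand collapses to `exp(-2sA)Σ`. Its antiderivative is `-½A⁻¹exp(-2sA)Σ`.
-/

open Matrix MeasureTheory

attribute [local instance] Matrix.normedAddCommGroup Matrix.normedSpace

open NormedSpace Filter Topology

namespace Matrix

variable {m : Type*} [Fintype m] [DecidableEq m]

theorem semiconjBy_exp {𝕜 : Type*} [RCLike 𝕜] {S A B : Matrix m m 𝕜} (h : SemiconjBy S A B) :
    SemiconjBy S (exp A) (exp B) := by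
  open scoped Norms.Operator in
  have : CompleteSpace (Matrix m m 𝕜) := FiniteDimensional.complete 𝕜 _
  exact h.exp_right

/-- The derivative is computed for the operator norm, under which matrices form a Banach algebra,
and transported through the slope characterisation, which only sees the topology. -/
theorem hasDerivAt_exp_smul_const {𝕜 : Type*} [RCLike 𝕜] (A : Matrix m m 𝕜) (t : 𝕜) :
    HasDerivAt (fun u : 𝕜 => exp (u • A)) (A * exp (t • A)) t := by
  have h : Tendsto (slope (fun u : 𝕜 => exp (u • A)) t) (𝓝[≠] t) (𝓝 (A * exp (t • A))) := by
    open scoped Norms.Operator in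
    have : CompleteSpace (Matrix m m 𝕜) := FiniteDimensional.complete 𝕜 _
    exact hasDerivAt_iff_tendsto_slope.1 (hasDerivAt_exp_smul_const' A t)
  exact hasDerivAt_iff_tendsto_slope.2 h

theorem semiconjBy_transpose_of_isSymm_inv_mul {R : Type*} [CommRing R] {A S : Matrix m m R}
    (hA : IsUnit A) (hS : S.IsSymm) (hAS : (A⁻¹ * S).IsSymm) : SemiconjBy S Aᵀ A := by
  have hdet : IsUnit A.det := A.isUnit_iff_isUnit_det.mp hA
  have hdetT : IsUnit Aᵀ.det := by rwa [det_transpose]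
  have h : S * Aᵀ⁻¹ = A⁻¹ * S := by
    simpa [IsSymm, transpose_mul, hS.eq, transpose_nonsing_inv] using hAS
  calc S * Aᵀ = A * (A⁻¹ * S) * Aᵀ := by rw [mul_nonsing_inv_cancel_left _ _ hdet]
    _ = A * S := by rw [← h, ← Matrix.mul_assoc, nonsing_inv_mul_cancel_right _ _ hdetT]

theorem exp_smul_mul_mul_exp_smul_transpose {𝕜 : Type*} [RCLike 𝕜] {A S : Matrix m m 𝕜}
    (h : SemiconjBy S Aᵀ A) (c : 𝕜) : exp (c • A) * S * exp (c • Aᵀ) = exp ((2 * c) • A) * S := by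
  have hexp : S * exp (c • Aᵀ) = exp (c • A) * S := semiconjBy_exp (h.smul_right c)
  rw [Matrix.mul_assoc, hexp, ← Matrix.mul_assoc, ← exp_add_of_commute _ _ (Commute.refl _),
    two_mul, add_smul]

theorem integral_exp_smul_mul {A : Matrix m m ℝ} (hA : IsUnit A) (S : Matrix m m ℝ) (a b : ℝ) :
    ∫ s in a..b, exp (s • A) * S = A⁻¹ * (exp (b • A) - exp (a • A)) * S := by
  let L : Matrix m m ℝ →L[ℝ] Matrix m m ℝ :=
    LinearMap.toContinuousLinearMap (LinearMap.mulLeft ℝ A⁻¹ ∘ₗ LinearMap.mulRight ℝ S)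
  have hderiv (u : ℝ) : HasDerivAt (fun u => A⁻¹ * (exp (u • A) * S)) (exp (u • A) * S) u := by
    refine (L.hasFDerivAt.comp_hasDerivAt u (hasDerivAt_exp_smul_const A u)).congr_deriv ?_
    change A⁻¹ * (A * exp (u • A) * S) = _
    rw [Matrix.mul_assoc, nonsing_inv_mul_cancel_left _ _ (A.isUnit_iff_isUnit_det.mp hA)]
  have hcont : Continuous fun s : ℝ => exp (s • A) * S :=
    (continuous_iff_continuousAt.2 fun s => (hasDerivAt_exp_smul_const A s).continuousAt).matrix_mul
      continuous_const
  rw [intervalIntegral.integral_eq_sub_of_hasDerivAt (fun u _ => hderiv u)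
    (hcont.intervalIntegrable a b), Matrix.mul_sub, Matrix.sub_mul, Matrix.mul_assoc,
    Matrix.mul_assoc]

end Matrix

theorem ou_covariance_integral_general {p : ℕ} (A S : Matrix (Fin p) (Fin p) ℝ)
    (hA : IsUnit A) (hS : Sᵀ = S) (hAS : (A⁻¹ * S)ᵀ = A⁻¹ * S)
    (t : ℝ) :
    (∫ s in (0 : ℝ)..t,
        NormedSpace.exp ((-s) • A) * S * NormedSpace.exp ((-s) • Aᵀ)) =
      (1 / 2 : ℝ) • (A⁻¹ * (1 - NormedSpace.exp ((-(2 * t)) • A)) * S) := by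
  have hsemi := semiconjBy_transpose_of_isSymm_inv_mul hA hS hAS
  calc (∫ s in (0 : ℝ)..t, exp ((-s) • A) * S * exp ((-s) • Aᵀ))
      = ∫ s in (0 : ℝ)..t, exp ((-2 * s) • A) * S := by
        refine intervalIntegral.integral_congr fun s _ => ?_
        simp only [exp_smul_mul_mul_exp_smul_transpose hsemi, mul_neg, neg_mul]
    _ = (-2 : ℝ)⁻¹ • ∫ s in (-2 * 0 : ℝ)..(-2 * t), exp (s • A) * S :=
        intervalIntegral.integral_comp_mul_left (fun s => exp (s • A) * S) (by norm_num)
    _ = (1 / 2 : ℝ) • (A⁻¹ * (1 - exp ((-(2 * t)) • A)) * S) := by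
        rw [integral_exp_smul_mul hA, mul_zero, zero_smul, exp_zero, ← neg_sub, Matrix.mul_neg,
          Matrix.neg_mul, smul_neg, ← neg_smul, neg_mul]
        norm_num

/-- Closed form of the OU covariance integral: if `A` is invertible, `Σ` is
symmetric, and `A⁻¹Σ` is symmetric, then for every `t ≥ 0`,
`∫₀ᵗ exp(−sA)·Σ·exp(−sAᵀ) ds = (1/2)·A⁻¹·(I − exp(−2tA))·Σ`. -/
theorem ou_covariance_integral {p : ℕ} (A S : Matrix (Fin p) (Fin p) ℝ)
    (hA : IsUnit A) (hS : Sᵀ = S) (hAS : (A⁻¹ * S)ᵀ = A⁻¹ * S)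
    (t : ℝ) (ht : 0 ≤ t) :
    (∫ s in (0 : ℝ)..t,
        NormedSpace.exp ((-s) • A) * S * NormedSpace.exp ((-s) • Aᵀ)) =
      (1 / 2 : ℝ) • (A⁻¹ * (1 - NormedSpace.exp ((-(2 * t)) • A)) * S) :=
  ou_covariance_integral_general A S hA hS hAS t
end
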